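/- (Lemma 1 of the paper) Let x̃_S ∈ [−d,d]^k with all entries nonzero, μ = (1/d)·min_{i∈S}|x̃_i| ∈ (0,1], η ∈ R^m, λ > 0 with A_S^⊤A_S − λI invertible, and define x*_S = x̃_S + (A_S^⊤ A_S − λI)^{−1}[λ x̃_S − λd·sign(x̃_S) + A_S^⊤ η]. If ‖(A_S^⊤ A_S − λI)^{−1}‖_∞ · [λd(1−μ) + ‖A_S^⊤ η‖_∞] ≤ μd (with strict inequality, or nonstrict and concluding sign agreement on nonzero coordinates), then sign(x*_S) = sign(x̃_S). -/

import Mathlib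

open Matrix BigOperators Finset

noncomputable section

/-- ℓ1 norm of a finitely-indexed real vector. -/
def l1 {ι : Type*} [Fintype ι] (v : ι → ℝ) : ℝ := ∑ i, |v i|

/-- Squared ℓ2 norm. -/
def l2sq {ι : Type*} [Fintype ι] (v : ι → ℝ) : ℝ := ∑ i, (v i) ^ 2

/-- ℓ∞ norm (max absolute entry). -/
def linf {ι : Type*} [Fintype ι] (v : ι → ℝ) : ℝ := ⨆ i, |v i|

/-- Euclidean inner product. -/
def ip {ι : Type*} [Fintype ι] (u v : ι → ℝ) : ℝ := ∑ i, u i * v i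

/-- Restriction of a vector to an index set (coordinates outside `S` set to zero). -/
def restr {n : ℕ} (S : Finset (Fin n)) (v : Fin n → ℝ) : Fin n → ℝ :=
  fun i => if i ∈ S then v i else 0

/-- Operator norm induced by the vector ∞-norm: max row ℓ1-sum. -/
def opInf {ι κ : Type*} [Fintype ι] [Fintype κ] (M : Matrix ι κ ℝ) : ℝ :=
  ⨆ i, ∑ j, |M i j|

/-- Operator norm induced by the vector 1-norm: max column ℓ1-sum. -/
def op1 {ι κ : Type*} [Fintype ι] [Fintype κ] (M : Matrix ι κ ℝ) : ℝ :=
  ⨆ j, ∑ i, |M i j|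

/-! The correction `x* - x̃ = M v` has `‖v‖∞ ≤ λ d (1 - μ) + ‖Aᵀ η‖∞`, since every `|x̃ᵢ|` lies in
`[μ d, d]`; hence no coordinate moves by `μ d ≤ |x̃ᵢ|` or more, and none can change sign. -/

section Linf

variable {ι κ : Type*} [Fintype ι] [Fintype κ]

lemma abs_le_linf (v : ι → ℝ) (i : ι) : |v i| ≤ linf v :=
  le_ciSup (f := fun i => |v i|) (Set.finite_range _).bddAbove i

lemma linf_nonneg (v : ι → ℝ) : 0 ≤ linf v :=
  Real.iSup_nonneg fun _ => abs_nonneg _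

lemma linf_le_of_forall_abs_le [Nonempty ι] {v : ι → ℝ} {L : ℝ} (h : ∀ i, |v i| ≤ L) :
    linf v ≤ L :=
  ciSup_le h

lemma linf_add_le (u w : ι → ℝ) : linf (u + w) ≤ linf u + linf w :=
  Real.iSup_le (fun i => (abs_add_le _ _).trans (add_le_add (abs_le_linf u i) (abs_le_linf w i)))
    (add_nonneg (linf_nonneg u) (linf_nonneg w))

lemma linf_smul (c : ℝ) (v : ι → ℝ) : linf (c • v) = |c| * linf v := by
  simp only [linf, Pi.smul_apply, smul_eq_mul, abs_mul]
  exact Real.mul_iSup_of_nonneg (abs_nonneg c) _ |>.symm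

lemma sum_abs_le_opInf (M : Matrix ι κ ℝ) (i : ι) : ∑ j, |M i j| ≤ opInf M :=
  le_ciSup (f := fun i => ∑ j, |M i j|) (Set.finite_range _).bddAbove i

lemma opInf_nonneg (M : Matrix ι κ ℝ) : 0 ≤ opInf M :=
  Real.iSup_nonneg fun _ => Finset.sum_nonneg fun _ _ => abs_nonneg _

lemma abs_mulVec_apply_le (M : Matrix ι κ ℝ) (v : κ → ℝ) (i : ι) :
    |(M *ᵥ v) i| ≤ opInf M * linf v :=
  calc |(M *ᵥ v) i| ≤ ∑ j, |M i j| * |v j| := by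
        simpa only [mulVec, dotProduct, abs_mul] using
          Finset.abs_sum_le_sum_abs (fun j => M i j * v j) univ
    _ ≤ ∑ j, |M i j| * linf v :=
        Finset.sum_le_sum fun j _ => mul_le_mul_of_nonneg_left (abs_le_linf v j) (abs_nonneg _)
    _ = (∑ j, |M i j|) * linf v := (Finset.sum_mul ..).symm
    _ ≤ opInf M * linf v := mul_le_mul_of_nonneg_right (sum_abs_le_opInf M i) (linf_nonneg v)

end Linf

lemma abs_sub_mul_sign_le {x c d : ℝ} (hx : x ≠ 0) (hc : c ≤ |x|) (hd : |x| ≤ d) :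
    |x - d * Real.sign x| ≤ d - c := by
  rcases hx.lt_or_gt with h | h
  · rw [abs_of_neg h] at hc hd
    rw [Real.sign_of_neg h, abs_le]
    constructor <;> linarith
  · rw [abs_of_pos h] at hc hd
    rw [Real.sign_of_pos h, abs_le]
    constructor <;> linarith

lemma Real.sign_eq_of_abs_sub_lt {x y : ℝ} (h : |y - x| < |x|) : Real.sign y = Real.sign x := by
  rcases lt_trichotomy x 0 with hx | rfl | hx
  · rw [abs_of_neg hx] at h
    rw [Real.sign_of_neg hx, Real.sign_of_neg (by linarith [(abs_lt.mp h).2])]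
  · rw [abs_zero] at h
    exact absurd h (abs_nonneg _).not_gt
  · rw [abs_of_pos hx] at h
    rw [Real.sign_of_pos hx, Real.sign_of_pos (by linarith [(abs_lt.mp h).1])]

theorem stmt10_general {m k : ℕ} (A : Matrix (Fin m) (Fin k) ℝ)
    (xt xstar : Fin k → ℝ) (η : Fin m → ℝ) (lam d μ : ℝ)
    (hd : 0 < d) (hlam : 0 < lam)
    (hxt : ∀ i, xt i ≠ 0) (hbox : ∀ i, |xt i| ≤ d)
    (hμ : μ = (1 / d) * ⨅ i, |xt i|)
    (hdef : xstar = xt + (Aᵀ * A - lam • (1 : Matrix (Fin k) (Fin k) ℝ))⁻¹ *ᵥ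
      (lam • xt - (lam * d) • (fun i => Real.sign (xt i)) + Aᵀ *ᵥ η))
    (hcond : opInf (Aᵀ * A - lam • (1 : Matrix (Fin k) (Fin k) ℝ))⁻¹ *
        (lam * d * (1 - μ) + linf (Aᵀ *ᵥ η)) < μ * d) :
    ∀ i, Real.sign (xstar i) = Real.sign (xt i) := by
  intro i
  have : Nonempty (Fin k) := ⟨i⟩
  set M := (Aᵀ * A - lam • (1 : Matrix (Fin k) (Fin k) ℝ))⁻¹
  set w : Fin k → ℝ := xt - d • fun j => Real.sign (xt j)
  have hmin : ∀ j, μ * d ≤ |xt j| := fun j => by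
    rw [hμ, one_div, mul_right_comm, inv_mul_cancel₀ hd.ne', one_mul]
    exact ciInf_le (Set.finite_range _).bddBelow j
  have hw : linf w ≤ d * (1 - μ) := linf_le_of_forall_abs_le fun j => by
    simpa [w, mul_one_sub, mul_comm μ] using abs_sub_mul_sign_le (hxt j) (hmin j) (hbox j)
  have hrhs : linf (lam • w + Aᵀ *ᵥ η) ≤ lam * d * (1 - μ) + linf (Aᵀ *ᵥ η) := by
    calc _ ≤ linf (lam • w) + linf (Aᵀ *ᵥ η) := linf_add_le _ _
      _ ≤ _ := by rw [linf_smul, abs_of_pos hlam, mul_assoc]; gcongr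
  have hstep : xstar i - xt i = (M *ᵥ (lam • w + Aᵀ *ᵥ η)) i := by
    rw [hdef, smul_sub, smul_smul]; simp [M]
  apply Real.sign_eq_of_abs_sub_lt
  calc |xstar i - xt i| ≤ opInf M * linf (lam • w + Aᵀ *ᵥ η) := hstep ▸ abs_mulVec_apply_le M _ i
    _ ≤ opInf M * (lam * d * (1 - μ) + linf (Aᵀ *ᵥ η)) :=
        mul_le_mul_of_nonneg_left hrhs (opInf_nonneg M)
    _ < μ * d := hcond
    _ ≤ |xt i| := hmin i

theorem stmt10 {m k : ℕ} (A : Matrix (Fin m) (Fin k) ℝ)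
    (xt xstar : Fin k → ℝ) (η : Fin m → ℝ) (lam d μ : ℝ)
    (hd : 0 < d) (hlam : 0 < lam)
    (hxt : ∀ i, xt i ≠ 0) (hbox : ∀ i, |xt i| ≤ d)
    (hμ : μ = (1 / d) * ⨅ i, |xt i|) (hμ0 : 0 < μ) (hμ1 : μ ≤ 1)
    (hinv : IsUnit (Aᵀ * A - lam • (1 : Matrix (Fin k) (Fin k) ℝ)).det)
    (hdef : xstar = xt + (Aᵀ * A - lam • (1 : Matrix (Fin k) (Fin k) ℝ))⁻¹ *ᵥ
      (lam • xt - (lam * d) • (fun i => Real.sign (xt i)) + Aᵀ *ᵥ η))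
    (hcond : opInf (Aᵀ * A - lam • (1 : Matrix (Fin k) (Fin k) ℝ))⁻¹ *
        (lam * d * (1 - μ) + linf (Aᵀ *ᵥ η)) < μ * d) :
    ∀ i, Real.sign (xstar i) = Real.sign (xt i) :=
  stmt10_general A xt xstar η lam d μ hd hlam hxt hbox hμ hdef hcond
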